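/- arXiv:2506.23243 — 2 statements merged into one kernel-verified Lean document; each statement's English description precedes it below -/
import Mathlib

section
/- Let Λ and Γ be rings that are separably equivalent via bimodules _ΛM_Γ and _ΓN_Λ. Then _ΛM is a projective generator of Mod Λ (i.e. M is projective and Λ is a direct summand of a finite direct sum of copies of M), and dually _ΓN is a projective generator of Mod Γ, M_Γ is a projective generator of Mod Γ^op, and N_Λ is a projective generator of Mod Λ^op. -/
open TensorProduct CategoryTheory MulOpposite

noncomputable section

/-! ## The balanced tensor product over a (possibly noncommutative) ring -/

/-- The submodule of relations defining the balanced tensor product `A ⊗[R] B`,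
where `A` is an `(S,R)`-bimodule and `B` is a left `R`-module. -/
def BTrel (S R : Type) [Ring S] [Ring R]
    (A : Type) [AddCommGroup A] [Module S A] [Module Rᵐᵒᵖ A] [SMulCommClass Rᵐᵒᵖ S A]
    (B : Type) [AddCommGroup B] [Module R B] : Submodule S (A ⊗[ℤ] B) :=
  Submodule.span S
    {x | ∃ (r : R) (a : A) (b : B), x = (op r • a) ⊗ₜ[ℤ] b - a ⊗ₜ[ℤ] (r • b)}

/-- The balanced tensor product `A ⊗[R] B` of a right `R`-module `A` (with a compatible left
`S`-action making it an `(S,R)`-bimodule) and a left `R`-module `B`; it is a left `S`-module. -/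
def BT (S R : Type) [Ring S] [Ring R]
    (A : Type) [AddCommGroup A] [Module S A] [Module Rᵐᵒᵖ A] [SMulCommClass Rᵐᵒᵖ S A]
    (B : Type) [AddCommGroup B] [Module R B] : Type :=
  (A ⊗[ℤ] B) ⧸ BTrel S R A B

instance (S R : Type) [Ring S] [Ring R]
    (A : Type) [AddCommGroup A] [Module S A] [Module Rᵐᵒᵖ A] [SMulCommClass Rᵐᵒᵖ S A]
    (B : Type) [AddCommGroup B] [Module R B] : AddCommGroup (BT S R A B) :=
  inferInstanceAs (AddCommGroup ((A ⊗[ℤ] B) ⧸ BTrel S R A B))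

instance (S R : Type) [Ring S] [Ring R]
    (A : Type) [AddCommGroup A] [Module S A] [Module Rᵐᵒᵖ A] [SMulCommClass Rᵐᵒᵖ S A]
    (B : Type) [AddCommGroup B] [Module R B] : Module S (BT S R A B) :=
  inferInstanceAs (Module S ((A ⊗[ℤ] B) ⧸ BTrel S R A B))

/-- The elementary tensor `a ⊗ b` in the balanced tensor product `A ⊗[R] B`. -/
def btmul (S R : Type) [Ring S] [Ring R]
    (A : Type) [AddCommGroup A] [Module S A] [Module Rᵐᵒᵖ A] [SMulCommClass Rᵐᵒᵖ S A]
    (B : Type) [AddCommGroup B] [Module R B] (a : A) (b : B) : BT S R A B :=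
  Submodule.Quotient.mk (a ⊗ₜ[ℤ] b)

/-- Functoriality of the balanced tensor product in the second variable:
this is the map `A ⊗[R] f : A ⊗[R] B ⟶ A ⊗[R] B'` induced by `f : B ⟶ B'`. -/
def btmap (S R : Type) [Ring S] [Ring R]
    (A : Type) [AddCommGroup A] [Module S A] [Module Rᵐᵒᵖ A] [SMulCommClass Rᵐᵒᵖ S A]
    {B B' : Type} [AddCommGroup B] [Module R B] [AddCommGroup B'] [Module R B']
    (f : B →ₗ[R] B') : BT S R A B →ₗ[S] BT S R A B' :=
  Submodule.mapQ _ _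
    (TensorProduct.AlgebraTensorModule.map (LinearMap.id (R := S) (M := A))
      (f.restrictScalars ℤ)) <| by
    rw [BTrel, Submodule.span_le]
    rintro x ⟨r, a, b, rfl⟩
    simp only [SetLike.mem_coe, Submodule.mem_comap, map_sub,
      TensorProduct.AlgebraTensorModule.map_tmul, LinearMap.id_coe, id_eq,
      LinearMap.coe_restrictScalars, map_smul]
    exact Submodule.subset_span ⟨r, a, f b, rfl⟩

/-! ## Separable equivalence -/

/-- A separable equivalence between rings `Λ` and `Γ`, given by a `(Λ,Γ)`-bimodule `M` and a
`(Γ,Λ)`-bimodule `N`, each finitely generated and projective as a one-sided module on either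
side, together with a `Λ`-bimodule isomorphism `M ⊗[Γ] N ≅ Λ ⊕ X` and a `Γ`-bimodule
isomorphism `N ⊗[Λ] M ≅ Γ ⊕ Y`.  The compatibility with the right actions is recorded on
elementary tensors (which generate the tensor product). -/
structure SepEq (Λ Γ : Type) [Ring Λ] [Ring Γ]
    (M : Type) [AddCommGroup M] [Module Λ M] [Module Γᵐᵒᵖ M] [SMulCommClass Γᵐᵒᵖ Λ M]
    (N : Type) [AddCommGroup N] [Module Γ N] [Module Λᵐᵒᵖ N] [SMulCommClass Λᵐᵒᵖ Γ N]
    (X : Type) [AddCommGroup X] [Module Λ X] [Module Λᵐᵒᵖ X] [SMulCommClass Λᵐᵒᵖ Λ X]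
    (Y : Type) [AddCommGroup Y] [Module Γ Y] [Module Γᵐᵒᵖ Y] [SMulCommClass Γᵐᵒᵖ Γ Y] :
    Type where
  finite_left_M : Module.Finite Λ M
  projective_left_M : Module.Projective Λ M
  finite_right_M : Module.Finite Γᵐᵒᵖ M
  projective_right_M : Module.Projective Γᵐᵒᵖ M
  finite_left_N : Module.Finite Γ N
  projective_left_N : Module.Projective Γ N
  finite_right_N : Module.Finite Λᵐᵒᵖ N
  projective_right_N : Module.Projective Λᵐᵒᵖ N
  /-- the left `Λ`-linear isomorphism `M ⊗[Γ] N ≅ Λ ⊕ X` -/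
  e : BT Λ Γ M N ≃ₗ[Λ] Λ × X
  /-- `e` is also right `Λ`-linear, i.e. it is a `Λ`-bimodule isomorphism -/
  e_right : ∀ (m : M) (n : N) (l : Λ),
    e (btmul Λ Γ M N m (op l • n)) = op l • e (btmul Λ Γ M N m n)
  /-- the left `Γ`-linear isomorphism `N ⊗[Λ] M ≅ Γ ⊕ Y` -/
  f : BT Γ Λ N M ≃ₗ[Γ] Γ × Y
  /-- `f` is also right `Γ`-linear, i.e. it is a `Γ`-bimodule isomorphism -/
  f_right : ∀ (n : N) (m : M) (g : Γ),
    f (btmul Γ Λ N M n (op g • m)) = op g • f (btmul Γ Λ N M n m)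

/-! ## Ext, orthogonal classes, (co)resolutions, Gorenstein categories -/

/-- `Ext^i_R(A, C) = 0` for all `i ≥ 1`. -/
def extVanishes (R : Type) [Ring R] (A C : Type) [AddCommGroup A] [Module R A]
    [AddCommGroup C] [Module R C] : Prop :=
  ∀ i : ℕ, 1 ≤ i →
    Subsingleton (((Ext ℤ (ModuleCat R) i).obj (Opposite.op (ModuleCat.of R A))).obj
      (ModuleCat.of R C))

/-- The left orthogonal class `⊥𝒞 = {A ∣ Ext^{≥1}(A, C) = 0 for all C ∈ 𝒞}`. -/
def leftPerp (R : Type) [Ring R] (𝒞 : Set (ModuleCat.{0} R)) : Set (ModuleCat.{0} R) :=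
  {A | ∀ C ∈ 𝒞, extVanishes R A C}

/-- The right orthogonal class `𝒞⊥ = {A ∣ Ext^{≥1}(C, A) = 0 for all C ∈ 𝒞}`. -/
def rightPerp (R : Type) [Ring R] (𝒞 : Set (ModuleCat.{0} R)) : Set (ModuleCat.{0} R) :=
  {A | ∀ C ∈ 𝒞, extVanishes R C A}

/-- A class of modules is self-orthogonal if `Ext^{≥1}(C, C') = 0` for all its members. -/
def SelfOrthClass (R : Type) [Ring R] (𝒞 : Set (ModuleCat.{0} R)) : Prop :=
  ∀ C ∈ 𝒞, ∀ C' ∈ 𝒞, extVanishes R C C'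

/-- Membership in `cores 𝒞̃`: `A` admits an exact sequence `0 → A → C^0 → C^1 → ⋯` with all
`C^i ∈ 𝒞` which stays exact after applying `Hom(-, C)` for every `C ∈ 𝒞`. -/
def MemCores (R : Type) [Ring R] (𝒞 : Set (ModuleCat.{0} R)) (A : ModuleCat.{0} R) : Prop :=
  ∃ (P : ℕ → ModuleCat.{0} R) (ι : A →ₗ[R] P 0) (d : ∀ i : ℕ, P i →ₗ[R] P (i + 1)),
    (∀ i, P i ∈ 𝒞) ∧ Function.Injective ⇑ι ∧ Function.Exact ⇑ι ⇑(d 0) ∧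
    (∀ i, Function.Exact ⇑(d i) ⇑(d (i + 1))) ∧
    (∀ C ∈ 𝒞,
      Function.Surjective (fun g : P 0 →ₗ[R] C => g ∘ₗ ι) ∧
      Function.Exact (fun g : P 1 →ₗ[R] C => g ∘ₗ d 0) (fun g : P 0 →ₗ[R] C => g ∘ₗ ι) ∧
      ∀ i, Function.Exact (fun g : P (i + 2) →ₗ[R] C => g ∘ₗ d (i + 1))
        (fun g : P (i + 1) →ₗ[R] C => g ∘ₗ d i))

/-- Membership in `res 𝒞̃`: `A` admits an exact sequence `⋯ → C_1 → C_0 → A → 0` with all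
`C_i ∈ 𝒞` which stays exact after applying `Hom(C, -)` for every `C ∈ 𝒞`. -/
def MemRes (R : Type) [Ring R] (𝒞 : Set (ModuleCat.{0} R)) (A : ModuleCat.{0} R) : Prop :=
  ∃ (P : ℕ → ModuleCat.{0} R) (π : P 0 →ₗ[R] A) (d : ∀ i : ℕ, P (i + 1) →ₗ[R] P i),
    (∀ i, P i ∈ 𝒞) ∧ Function.Surjective ⇑π ∧ Function.Exact ⇑(d 0) ⇑π ∧
    (∀ i, Function.Exact ⇑(d (i + 1)) ⇑(d i)) ∧
    (∀ C ∈ 𝒞,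
      Function.Surjective (fun g : C →ₗ[R] P 0 => π ∘ₗ g) ∧
      Function.Exact (fun g : C →ₗ[R] P 1 => d 0 ∘ₗ g) (fun g : C →ₗ[R] P 0 => π ∘ₗ g) ∧
      ∀ i, Function.Exact (fun g : C →ₗ[R] P (i + 2) => d (i + 1) ∘ₗ g)
        (fun g : C →ₗ[R] P (i + 1) => d i ∘ₗ g))

/-- The right Gorenstein category `r𝒢(𝒞) = ⊥𝒞 ∩ cores 𝒞̃`. -/
def rGor (R : Type) [Ring R] (𝒞 : Set (ModuleCat.{0} R)) : Set (ModuleCat.{0} R) :=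
  {A | A ∈ leftPerp R 𝒞 ∧ MemCores R 𝒞 A}

/-- The left Gorenstein category `l𝒢(𝒞) = 𝒞⊥ ∩ res 𝒞̃`. -/
def lGor (R : Type) [Ring R] (𝒞 : Set (ModuleCat.{0} R)) : Set (ModuleCat.{0} R) :=
  {A | A ∈ rightPerp R 𝒞 ∧ MemRes R 𝒞 A}

/-- Membership in the Gorenstein category `𝒢(𝒞)`: there is an exact complex with all terms
in `𝒞`, which is both `Hom(𝒞, -)`-exact and `Hom(-, 𝒞)`-exact, such that `A` is isomorphic
to one of its images. -/
def MemGor (R : Type) [Ring R] (𝒞 : Set (ModuleCat.{0} R)) (A : ModuleCat.{0} R) : Prop :=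
  ∃ (P : ℤ → ModuleCat.{0} R) (d : ∀ i : ℤ, P i →ₗ[R] P (i + 1)),
    (∀ i, P i ∈ 𝒞) ∧ (∀ i, Function.Exact ⇑(d i) ⇑(d (i + 1))) ∧
    (∀ C ∈ 𝒞, ∀ i : ℤ, Function.Exact (fun g : P (i + 1 + 1) →ₗ[R] C => g ∘ₗ d (i + 1))
      (fun g : P (i + 1) →ₗ[R] C => g ∘ₗ d i)) ∧
    (∀ C ∈ 𝒞, ∀ i : ℤ, Function.Exact (fun g : C →ₗ[R] P i => d i ∘ₗ g)
      (fun g : C →ₗ[R] P (i + 1) => d (i + 1) ∘ₗ g)) ∧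
    Nonempty (A ≃ₗ[R] LinearMap.range (d 0))

/-- The class of projective left `R`-modules. -/
def projClass (R : Type) [Ring R] : Set (ModuleCat.{0} R) :=
  {P | Module.Projective R P}

/-- The image class `T_A(𝒞)`: the class of left `S`-modules isomorphic to `A ⊗[R] C`
for some `C ∈ 𝒞`. -/
def tensorClass (S R : Type) [Ring S] [Ring R]
    (A : Type) [AddCommGroup A] [Module S A] [Module Rᵐᵒᵖ A] [SMulCommClass Rᵐᵒᵖ S A]
    (𝒞 : Set (ModuleCat.{0} R)) : Set (ModuleCat.{0} S) :=
  {D | ∃ C ∈ 𝒞, Nonempty (D ≃ₗ[S] BT S R A C)}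

/-- `Add C`: the class of modules isomorphic to direct summands of arbitrary direct sums of
copies of `C`. -/
def AddClass (R : Type) [Ring R] (C : Type) [AddCommGroup C] [Module R C] :
    Set (ModuleCat.{0} R) :=
  {D | ∃ (ι : Type) (s : D →ₗ[R] (ι →₀ C)) (r : (ι →₀ C) →ₗ[R] D), r ∘ₗ s = LinearMap.id}

/-- `add C`: the class of modules isomorphic to direct summands of finite direct sums of
copies of `C`. -/
def addClass (R : Type) [Ring R] (C : Type) [AddCommGroup C] [Module R C] :
    Set (ModuleCat.{0} R) :=
  {D | ∃ (n : ℕ) (s : D →ₗ[R] (Fin n → C)) (r : (Fin n → C) →ₗ[R] D), r ∘ₗ s = LinearMap.id}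

/-- An additive subcategory of `Mod R` closed under isomorphisms, viewed as a class of
modules: it is closed under isomorphisms, contains a zero module and is closed under finite
direct sums. -/
structure IsAdditiveSubcat (R : Type) [Ring R] (𝒞 : Set (ModuleCat.{0} R)) : Prop where
  iso_mem : ∀ {A B : ModuleCat.{0} R}, A ∈ 𝒞 → Nonempty (A ≃ₗ[R] B) → B ∈ 𝒞
  zero_mem : ModuleCat.of R PUnit ∈ 𝒞
  sum_mem : ∀ {A B : ModuleCat.{0} R}, A ∈ 𝒞 → B ∈ 𝒞 → ModuleCat.of R (A × B) ∈ 𝒞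

/-- `M` is a projective generator: it is projective and the ring is a direct summand of a
finite direct sum of copies of `M`. -/
def IsProjectiveGenerator (R : Type) [Ring R] (M : Type) [AddCommGroup M] [Module R M] :
    Prop :=
  Module.Projective R M ∧
    ∃ (n : ℕ) (s : R →ₗ[R] (Fin n → M)) (r : (Fin n → M) →ₗ[R] R), r ∘ₗ s = LinearMap.id

/-- `G` is Gorenstein projective: `G` is an image of a totally acyclic complex of
projectives, i.e. an exact complex of projective modules which stays exact after applying
`Hom(-, P)` for every projective module `P`. -/
def IsGorensteinProjective (R : Type) [Ring R] (G : Type) [AddCommGroup G] [Module R G] :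
    Prop :=
  ∃ (P : ℤ → ModuleCat.{0} R) (d : ∀ i : ℤ, P i →ₗ[R] P (i + 1)),
    (∀ i, Module.Projective R (P i)) ∧ (∀ i, Function.Exact ⇑(d i) ⇑(d (i + 1))) ∧
    (∀ (Q : ModuleCat.{0} R), Module.Projective R Q → ∀ i : ℤ,
      Function.Exact (fun g : P (i + 1 + 1) →ₗ[R] Q => g ∘ₗ d (i + 1))
        (fun g : P (i + 1) →ₗ[R] Q => g ∘ₗ d i)) ∧
    Nonempty (G ≃ₗ[R] LinearMap.range (d 0))

/-- `G` is Gorenstein injective: `G` is an image of an exact complex of injective modules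
which stays exact after applying `Hom(I, -)` for every injective module `I`. -/
def IsGorensteinInjective (R : Type) [Ring R] (G : Type) [AddCommGroup G] [Module R G] :
    Prop :=
  ∃ (P : ℤ → ModuleCat.{0} R) (d : ∀ i : ℤ, P i →ₗ[R] P (i + 1)),
    (∀ i, Module.Injective R (P i)) ∧ (∀ i, Function.Exact ⇑(d i) ⇑(d (i + 1))) ∧
    (∀ (I : ModuleCat.{0} R), Module.Injective R I → ∀ i : ℤ,
      Function.Exact (fun g : I →ₗ[R] P i => d i ∘ₗ g)
        (fun g : I →ₗ[R] P (i + 1) => d (i + 1) ∘ₗ g)) ∧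
    Nonempty (G ≃ₗ[R] LinearMap.range (d 0))

/-- `C` is a Wakamatsu tilting left `R`-module: `C` is self-orthogonal, admits a resolution
by finitely generated projective modules, and there is an exact sequence
`0 → R → C^0 → C^1 → ⋯` with all `C^i ∈ add C` which stays exact under `Hom(-, add C)`. -/
def IsWakamatsuTilting (R : Type) [Ring R] (C : Type) [AddCommGroup C] [Module R C] :
    Prop :=
  extVanishes R C C ∧
  (∃ (P : ℕ → ModuleCat.{0} R) (π : P 0 →ₗ[R] C) (d : ∀ i : ℕ, P (i + 1) →ₗ[R] P i),
    (∀ i, Module.Finite R (P i) ∧ Module.Projective R (P i)) ∧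
    Function.Surjective ⇑π ∧ Function.Exact ⇑(d 0) ⇑π ∧
    (∀ i, Function.Exact ⇑(d (i + 1)) ⇑(d i))) ∧
  MemCores R (addClass R C) (ModuleCat.of R R)

end

/-! If `B` is generated by `b₁, …, bₙ` as a left `R`-module, then `v ↦ ∑ vᵢ ⊗ bᵢ` maps `Aⁿ` onto
`A ⊗[R] B`, since `a ⊗ ∑ rᵢ bᵢ = ∑ (a rᵢ) ⊗ bᵢ`. Followed by `M ⊗[Γ] N ≅ Λ × X → Λ` this gives a
`Λ`-linear surjection `Mⁿ → Λ`, which splits because `Λ` is free. Generating `M` as a right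
`Γ`-module instead gives a surjection `Nⁿ → Λ`, which is right `Λ`-linear because the isomorphism
is one of bimodules. -/

section BalancedTensor

variable {S R : Type} [Ring S] [Ring R]
  {A : Type} [AddCommGroup A] [Module S A] [Module Rᵐᵒᵖ A] [SMulCommClass Rᵐᵒᵖ S A]
  {B : Type} [AddCommGroup B] [Module R B] {ι : Type} [Fintype ι]
  {X : Type} [AddCommGroup X] [Module S X]

theorem btmul_op_smul (r : R) (a : A) (b : B) :
    btmul S R A B (op r • a) b = btmul S R A B a (r • b) :=
  (Submodule.Quotient.eq _).2 <| Submodule.subset_span ⟨r, a, b, rfl⟩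

theorem BT.induction_on {P : BT S R A B → Prop} (x : BT S R A B) (zero : P 0)
    (tmul : ∀ a b, P (btmul S R A B a b)) (add : ∀ x y, P x → P y → P (x + y)) : P x := by
  obtain ⟨z, rfl⟩ := Submodule.Quotient.mk_surjective _ x
  induction z using TensorProduct.induction_on with
  | zero => exact zero
  | tmul a b => exact tmul a b
  | add z w hz hw => exact add _ _ hz hw

variable (S R A) in
def btmulLeft (b : B) : A →ₗ[S] BT S R A B :=
  (BTrel S R A B).mkQ ∘ₗ (AlgebraTensorModule.mk ℤ S A B).flip b

variable (S R B) in
def btmulRight (a : A) : B →+ BT S R A B :=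
  (BTrel S R A B).mkQ.toAddMonoidHom.comp (TensorProduct.mk ℤ A B a).toAddMonoidHom

@[simp]
theorem btmulLeft_apply (b : B) (a : A) : btmulLeft S R A b a = btmul S R A B a b := rfl

@[simp]
theorem btmulRight_apply (a : A) (b : B) : btmulRight S R B a b = btmul S R A B a b := rfl

variable (S R A) in
def sumBtmulLeft (g : ι → B) : (ι → A) →ₗ[S] BT S R A B :=
  ∑ i, btmulLeft S R A (g i) ∘ₗ LinearMap.proj i

variable (S R B) in
def sumBtmulRight (g : ι → A) : (ι → B) →+ BT S R A B :=
  ∑ i, (btmulRight S R B (g i)).comp (Pi.evalAddMonoidHom _ i)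

theorem sumBtmulLeft_apply (g : ι → B) (v : ι → A) :
    sumBtmulLeft S R A g v = ∑ i, btmul S R A B (v i) (g i) := by
  simp [sumBtmulLeft]

theorem sumBtmulRight_apply (g : ι → A) (v : ι → B) :
    sumBtmulRight S R B g v = ∑ i, btmul S R A B (g i) (v i) := by
  simp [sumBtmulRight]

theorem surjective_sumBtmulLeft {g : ι → B} (hg : Submodule.span R (Set.range g) = ⊤) :
    Function.Surjective (sumBtmulLeft S R A g) := by
  intro x
  induction x using BT.induction_on with
  | zero => exact ⟨0, map_zero _⟩
  | tmul a b =>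
    have hb : b ∈ Submodule.span R (Set.range g) := hg ▸ Submodule.mem_top
    obtain ⟨c, rfl⟩ := (Submodule.mem_span_range_iff_exists_fun R).1 hb
    refine ⟨fun i => op (c i) • a, ?_⟩
    simp only [sumBtmulLeft_apply, btmul_op_smul]
    exact (map_sum (btmulRight S R B a) _ _).symm
  | add x y hx hy =>
    obtain ⟨v, rfl⟩ := hx
    obtain ⟨w, rfl⟩ := hy
    exact ⟨v + w, map_add _ _ _⟩

theorem surjective_sumBtmulRight {g : ι → A} (hg : Submodule.span Rᵐᵒᵖ (Set.range g) = ⊤) :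
    Function.Surjective (sumBtmulRight S R B g) := by
  intro x
  induction x using BT.induction_on with
  | zero => exact ⟨0, map_zero _⟩
  | tmul a b =>
    have ha : a ∈ Submodule.span Rᵐᵒᵖ (Set.range g) := hg ▸ Submodule.mem_top
    obtain ⟨c, rfl⟩ := (Submodule.mem_span_range_iff_exists_fun Rᵐᵒᵖ).1 ha
    refine ⟨fun i => (c i).unop • b, ?_⟩
    simp only [sumBtmulRight_apply, ← btmul_op_smul, op_unop]
    exact (map_sum (btmulLeft S R A b) _ _).symm
  | add x y hx hy =>
    obtain ⟨v, rfl⟩ := hx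
    obtain ⟨w, rfl⟩ := hy
    exact ⟨v + w, map_add _ _ _⟩

theorem isProjectiveGenerator_of_equiv_prod [Module.Projective S A] [Module.Finite R B]
    (e : BT S R A B ≃ₗ[S] S × X) : IsProjectiveGenerator S A := by
  obtain ⟨n, g, hg⟩ := Module.Finite.exists_fin (R := R) (M := B)
  have hr : Function.Surjective (LinearMap.fst S S X ∘ₗ e.toLinearMap ∘ₗ sumBtmulLeft S R A g) :=
    Prod.fst_surjective.comp (e.surjective.comp (surjective_sumBtmulLeft hg))
  obtain ⟨s, hs⟩ := Module.projective_lifting_property _ LinearMap.id hr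
  exact ⟨inferInstance, n, s, _, hs⟩

theorem isProjectiveGenerator_op_of_equiv_prod [Module Sᵐᵒᵖ B] [Module Sᵐᵒᵖ X]
    [Module.Projective Sᵐᵒᵖ B] [Module.Finite Rᵐᵒᵖ A] (e : BT S R A B ≃ₗ[S] S × X)
    (he : ∀ (a : A) (b : B) (t : S),
      e (btmul S R A B a (op t • b)) = op t • e (btmul S R A B a b)) :
    IsProjectiveGenerator Sᵐᵒᵖ B := by
  obtain ⟨n, g, hg⟩ := Module.Finite.exists_fin (R := Rᵐᵒᵖ) (M := A)
  let ψ := sumBtmulRight S R B g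
  have he_sum : ∀ (t : Sᵐᵒᵖ) (v : Fin n → B), e (ψ (t • v)) = t • e (ψ v) := by
    intro t v
    simp only [ψ, sumBtmulRight_apply, map_sum, Finset.smul_sum]
    exact Finset.sum_congr rfl fun i _ => he (g i) (v i) t.unop
  let r : (Fin n → B) →ₗ[Sᵐᵒᵖ] Sᵐᵒᵖ :=
    { toFun v := op (e (ψ v)).1
      map_add' v w := by simp
      map_smul' t v := by simp [he_sum] }
  have hr : Function.Surjective r := fun t => by
    obtain ⟨v, hv⟩ := surjective_sumBtmulRight (B := B) hg (e.symm (t.unop, 0))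
    exact ⟨v, by simp [r, ψ, hv]⟩
  obtain ⟨s, hs⟩ := Module.projective_lifting_property r LinearMap.id hr
  exact ⟨inferInstance, n, s, r, hs⟩

end BalancedTensor

theorem separable_equivalence_projective_generators (Λ Γ : Type) [Ring Λ] [Ring Γ]
    (M : Type) [AddCommGroup M] [Module Λ M] [Module Γᵐᵒᵖ M] [SMulCommClass Γᵐᵒᵖ Λ M]
    (N : Type) [AddCommGroup N] [Module Γ N] [Module Λᵐᵒᵖ N] [SMulCommClass Λᵐᵒᵖ Γ N]
    (X : Type) [AddCommGroup X] [Module Λ X] [Module Λᵐᵒᵖ X] [SMulCommClass Λᵐᵒᵖ Λ X]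
    (Y : Type) [AddCommGroup Y] [Module Γ Y] [Module Γᵐᵒᵖ Y] [SMulCommClass Γᵐᵒᵖ Γ Y]
    (sep : SepEq Λ Γ M N X Y) :
    IsProjectiveGenerator Λ M ∧ IsProjectiveGenerator Γ N ∧
      IsProjectiveGenerator Γᵐᵒᵖ M ∧ IsProjectiveGenerator Λᵐᵒᵖ N := by
  obtain ⟨_, _, _, _, _, _, _, _, e, he, f, hf⟩ := sep
  exact ⟨isProjectiveGenerator_of_equiv_prod e, isProjectiveGenerator_of_equiv_prod f,
    isProjectiveGenerator_op_of_equiv_prod f hf, isProjectiveGenerator_op_of_equiv_prod e he⟩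
end

section
/- Let Λ and Γ be separably equivalent via _ΛM_Γ and _ΓN_Λ, let C be a left Λ-module, and let L be a left Γ-module. (1) If Ext^i_Γ(L, T_N(C')) = 0 for all i ≥ 1 and all C' ∈ Add C, then Ext^i_Γ(L, D) = 0 for all i ≥ 1 and all D ∈ Add(T_N(C)). (2) If C is self-orthogonal and L admits an exact sequence 0 → L → D^0 → D^1 → ⋯ with all D^i in T_N(Add C) that stays exact under Hom_Γ(-, T_N(C')) for all C' ∈ Add C, then L admits an exact sequence 0 → L → E^0 → E^1 → ⋯ with all E^i in Add(T_N(C)) that stays exact under Hom_Γ(-, E) for all E ∈ Add(T_N(C)). -/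
open TensorProduct CategoryTheory MulOpposite

/-!
Ext-vanishing against a module and exactness of `Hom(-, E)` both pass from `E` to its direct
summands, so both conditions move from a class `𝒞` to any class whose members are summands of
members of `𝒞`. Since `N ⊗[Λ] -` commutes with direct sums, every module in `Add (N ⊗[Λ] C)` is a
summand of `N ⊗[Λ] C^(ι) ∈ T_N(Add C)`; conversely `T_N(Add C) ⊆ Add (N ⊗[Λ] C)` because tensoring
preserves summands.
-/

noncomputable section

namespace BT

variable {S R : Type} [Ring S] [Ring R]
    {A : Type} [AddCommGroup A] [Module S A] [Module Rᵐᵒᵖ A] [SMulCommClass Rᵐᵒᵖ S A]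
    {B B' B'' : Type} [AddCommGroup B] [Module R B] [AddCommGroup B'] [Module R B']
    [AddCommGroup B''] [Module R B'']

@[elab_as_elim]
theorem induction_on_s16 {motive : BT S R A B → Prop} (x : BT S R A B) (zero : motive 0)
    (tmul : ∀ a b, motive (btmul S R A B a b))
    (add : ∀ x y, motive x → motive y → motive (x + y)) : motive x := by
  obtain ⟨t, rfl⟩ := Submodule.mkQ_surjective (BTrel S R A B) x
  induction t with
  | zero => exact zero
  | tmul a b => exact tmul a b
  | add u v hu hv => exact add _ _ hu hv

theorem btmap_btmul (f : B →ₗ[R] B') (a : A) (b : B) :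
    btmap S R A f (btmul S R A B a b) = btmul S R A B' a (f b) := rfl

theorem btmap_id : btmap S R A (LinearMap.id : B →ₗ[R] B) = LinearMap.id :=
  LinearMap.ext fun x => x.induction_on_s16 rfl (fun _ _ => rfl) fun _ _ hx hy => by
    rw [map_add, hx, hy]; rfl

theorem btmap_comp (g : B' →ₗ[R] B'') (f : B →ₗ[R] B') :
    btmap S R A (g ∘ₗ f) = btmap S R A g ∘ₗ btmap S R A f :=
  LinearMap.ext fun x => x.induction_on_s16 rfl (fun _ _ => rfl) fun _ _ hx hy => by
    rw [map_add, hx, hy, map_add]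

theorem btmap_comp_btmap_of_comp_eq_id {s : B →ₗ[R] B'} {r : B' →ₗ[R] B}
    (hrs : r ∘ₗ s = LinearMap.id) : btmap S R A r ∘ₗ btmap S R A s = LinearMap.id := by
  rw [← btmap_comp, hrs, btmap_id]

variable (S R A B) in
def mk : A ⊗[ℤ] B →ₗ[S] BT S R A B := (BTrel S R A B).mkQ

theorem mk_tmul (a : A) (b : B) : mk S R A B (a ⊗ₜ b) = btmul S R A B a b := rfl

theorem btmul_zero (a : A) : btmul S R A B a 0 = 0 := by
  rw [← mk_tmul, TensorProduct.tmul_zero, map_zero]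

theorem btmul_add (a : A) (b b' : B) :
    btmul S R A B a (b + b') = btmul S R A B a b + btmul S R A B a b' := by
  rw [← mk_tmul, TensorProduct.tmul_add, map_add, mk_tmul, mk_tmul]

theorem btmul_op_smul (r : R) (a : A) (b : B) :
    btmul S R A B (op r • a) b = btmul S R A B a (r • b) :=
  (Submodule.Quotient.eq _).mpr (Submodule.subset_span ⟨r, a, b, rfl⟩)

variable (S R A B) in
def finsuppRightHom (ι : Type) [DecidableEq ι] : BT S R A (ι →₀ B) →ₗ[S] (ι →₀ BT S R A B) :=
  Submodule.liftQ _
    (Finsupp.mapRange.linearMap (mk S R A B) ∘ₗ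
      (TensorProduct.finsuppRight ℤ S A B ι).toLinearMap) <| by
    rw [BTrel, Submodule.span_le]
    rintro _ ⟨r, a, b, rfl⟩
    rw [SetLike.mem_coe, LinearMap.mem_ker, map_sub, sub_eq_zero]
    ext i
    simp only [LinearMap.comp_apply, LinearEquiv.coe_coe, Finsupp.mapRange.linearMap_apply,
      Finsupp.mapRange_apply, TensorProduct.finsuppRight_apply_tmul_apply, Finsupp.smul_apply,
      mk_tmul, btmul_op_smul]

theorem finsuppRightHom_btmul_apply (ι : Type) [DecidableEq ι] (a : A) (b : ι →₀ B) (i : ι) :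
    finsuppRightHom S R A B ι (btmul S R A _ a b) i = btmul S R A B a (b i) :=
  congrArg (mk S R A B) (TensorProduct.finsuppRight_apply_tmul_apply a b i)

theorem finsuppRightHom_btmul_single (ι : Type) [DecidableEq ι] (a : A) (i : ι) (b : B) :
    finsuppRightHom S R A B ι (btmul S R A _ a (Finsupp.single i b)) =
      Finsupp.single i (btmul S R A B a b) := by
  ext j
  rw [finsuppRightHom_btmul_apply, Finsupp.single_apply, Finsupp.single_apply]
  split_ifs
  · rfl
  · exact btmul_zero a

variable (S R A B) in
def finsuppRightInv (ι : Type) : (ι →₀ BT S R A B) →ₗ[S] BT S R A (ι →₀ B) :=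
  Finsupp.lsum ℕ fun i => btmap S R A (Finsupp.lsingle i)

theorem finsuppRightInv_single (ι : Type) (i : ι) (x : BT S R A B) :
    finsuppRightInv S R A B ι (Finsupp.single i x) = btmap S R A (Finsupp.lsingle i) x :=
  Finsupp.lsum_single _ _ _ _

theorem finsuppRightHom_comp_finsuppRightInv (ι : Type) [DecidableEq ι] :
    finsuppRightHom S R A B ι ∘ₗ finsuppRightInv S R A B ι = LinearMap.id := by
  refine Finsupp.lhom_ext fun i x => ?_
  rw [LinearMap.comp_apply, finsuppRightInv_single, LinearMap.id_apply]
  induction x using induction_on_s16 with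
  | zero => rw [map_zero, map_zero, Finsupp.single_zero]
  | tmul a b => rw [btmap_btmul, Finsupp.lsingle_apply, finsuppRightHom_btmul_single]
  | add x y hx hy => rw [map_add, map_add, hx, hy, Finsupp.single_add]

theorem finsuppRightInv_comp_finsuppRightHom (ι : Type) [DecidableEq ι] :
    finsuppRightInv S R A B ι ∘ₗ finsuppRightHom S R A B ι = LinearMap.id := by
  refine LinearMap.ext fun x => ?_
  rw [LinearMap.comp_apply, LinearMap.id_apply]
  induction x using induction_on_s16 with
  | zero => rw [map_zero, map_zero]
  | tmul a b =>
    induction b using Finsupp.induction_linear with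
    | zero => rw [btmul_zero, map_zero, map_zero]
    | add b b' hb hb' => rw [btmul_add, map_add, map_add, hb, hb']
    | single i c =>
      rw [finsuppRightHom_btmul_single, finsuppRightInv_single, btmap_btmul, Finsupp.lsingle_apply]
  | add x y hx hy => rw [map_add, map_add, hx, hy]

variable (S R A B) in
def finsuppRight (ι : Type) [DecidableEq ι] : BT S R A (ι →₀ B) ≃ₗ[S] (ι →₀ BT S R A B) :=
  .ofLinearMap _ _ (finsuppRightHom_comp_finsuppRightInv ι)
    (finsuppRightInv_comp_finsuppRightHom ι)

end BT

end

section Retract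

variable {R : Type} [Ring R]

def retractClass (𝒞 : Set (ModuleCat.{0} R)) : Set (ModuleCat.{0} R) :=
  {E | ∃ F ∈ 𝒞, ∃ (s : E →ₗ[R] F) (r : F →ₗ[R] E), r ∘ₗ s = LinearMap.id}

theorem subsingleton_obj_of_comp_eq_id (G : ModuleCat.{0} R ⥤ ModuleCat.{0} ℤ)
    {E F : ModuleCat.{0} R} {s : E →ₗ[R] F} {r : F →ₗ[R] E} (hrs : r ∘ₗ s = LinearMap.id)
    [Subsingleton (G.obj F)] : Subsingleton (G.obj E) := by
  have hGrs : G.map (ModuleCat.ofHom s) ≫ G.map (ModuleCat.ofHom r) = 𝟙 _ := by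
    rw [← G.map_comp, ← ModuleCat.ofHom_comp, hrs]
    exact G.map_id E
  have hinv : Function.LeftInverse (G.map (ModuleCat.ofHom r)) (G.map (ModuleCat.ofHom s)) :=
    fun x => by rw [← ConcreteCategory.comp_apply, hGrs, ConcreteCategory.id_apply]
  exact hinv.injective.subsingleton

theorem leftPerp_subset_leftPerp_of_subset_retractClass {𝒞 𝒟 : Set (ModuleCat.{0} R)}
    (h : 𝒟 ⊆ retractClass 𝒞) : leftPerp R 𝒞 ⊆ leftPerp R 𝒟 := by
  intro L hL E hE i hi
  obtain ⟨F, hF, s, r, hrs⟩ := h hE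
  have := hL F hF i hi
  exact subsingleton_obj_of_comp_eq_id _ hrs

variable {U V W E F : Type} [AddCommGroup U] [Module R U] [AddCommGroup V] [Module R V]
  [AddCommGroup W] [Module R W] [AddCommGroup E] [Module R E] [AddCommGroup F] [Module R F]

theorem surjective_precomp_of_comp_eq_id (u : U →ₗ[R] V) {s : E →ₗ[R] F} {r : F →ₗ[R] E}
    (hrs : r ∘ₗ s = LinearMap.id)
    (hF : Function.Surjective fun g : V →ₗ[R] F => g ∘ₗ u) :
    Function.Surjective fun g : V →ₗ[R] E => g ∘ₗ u := by
  intro g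
  obtain ⟨h, hh⟩ := hF (s ∘ₗ g)
  refine ⟨r ∘ₗ h, ?_⟩
  dsimp only at hh ⊢
  rw [LinearMap.comp_assoc, hh, ← LinearMap.comp_assoc, hrs, LinearMap.id_comp]

theorem exact_precomp_of_comp_eq_id {u : U →ₗ[R] V} {v : V →ₗ[R] W} (hvu : v ∘ₗ u = 0)
    {s : E →ₗ[R] F} {r : F →ₗ[R] E} (hrs : r ∘ₗ s = LinearMap.id)
    (hF : Function.Exact (fun g : W →ₗ[R] F => g ∘ₗ v) (fun g : V →ₗ[R] F => g ∘ₗ u)) :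
    Function.Exact (fun g : W →ₗ[R] E => g ∘ₗ v) (fun g : V →ₗ[R] E => g ∘ₗ u) := by
  intro g
  constructor
  · intro hg
    obtain ⟨h, hh⟩ := (hF (s ∘ₗ g)).1 <| by
      dsimp only at hg ⊢
      rw [LinearMap.comp_assoc, hg, LinearMap.comp_zero]
    refine ⟨r ∘ₗ h, ?_⟩
    dsimp only at hh ⊢
    rw [LinearMap.comp_assoc, hh, ← LinearMap.comp_assoc, hrs, LinearMap.id_comp]
  · rintro ⟨h, rfl⟩
    dsimp only
    rw [LinearMap.comp_assoc, hvu, LinearMap.comp_zero]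

theorem MemCores.of_subset_retractClass {𝒞 𝒟 : Set (ModuleCat.{0} R)}
    {L : ModuleCat.{0} R} (h𝒞𝒟 : 𝒞 ⊆ 𝒟) (h𝒟𝒞 : 𝒟 ⊆ retractClass 𝒞) (hL : MemCores R 𝒞 L) :
    MemCores R 𝒟 L := by
  obtain ⟨P, ι, d, hP, hι, hex₀, hex, hHom⟩ := hL
  have hd₀ : d 0 ∘ₗ ι = 0 := LinearMap.ext fun x => (hex₀ (ι x)).2 ⟨x, rfl⟩
  have hd : ∀ i, d (i + 1) ∘ₗ d i = 0 := fun i =>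
    LinearMap.ext fun x => (hex i (d i x)).2 ⟨x, rfl⟩
  refine ⟨P, ι, d, fun i => h𝒞𝒟 (hP i), hι, hex₀, hex, fun E hE => ?_⟩
  obtain ⟨F, hF, s, r, hrs⟩ := h𝒟𝒞 hE
  obtain ⟨hsurj, hexF₀, hexF⟩ := hHom F hF
  exact ⟨surjective_precomp_of_comp_eq_id ι hrs hsurj, exact_precomp_of_comp_eq_id hd₀ hrs hexF₀,
    fun i => exact_precomp_of_comp_eq_id (hd i) hrs (hexF i)⟩

end Retract

section TensorClass

variable {S R : Type} [Ring S] [Ring R]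
    {A : Type} [AddCommGroup A] [Module S A] [Module Rᵐᵒᵖ A] [SMulCommClass Rᵐᵒᵖ S A]
    {C : Type} [AddCommGroup C] [Module R C]

theorem finsupp_mem_tensorClass_AddClass (ι : Type) :
    ModuleCat.of S (ι →₀ BT S R A C) ∈ tensorClass S R A (AddClass R C) := by
  classical
  exact ⟨ModuleCat.of R (ι →₀ C), ⟨ι, LinearMap.id, LinearMap.id, LinearMap.id_comp _⟩,
    ⟨(BT.finsuppRight S R A C ι).symm⟩⟩

theorem tensorClass_AddClass_subset_AddClass :
    tensorClass S R A (AddClass R C) ⊆ AddClass S (BT S R A C) := by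
  rintro D ⟨C', ⟨ι, s, r, hrs⟩, ⟨e⟩⟩
  classical
  let T := BT.finsuppRight S R A C ι
  refine ⟨ι, T.toLinearMap ∘ₗ btmap S R A s ∘ₗ e.toLinearMap,
    e.symm.toLinearMap ∘ₗ btmap S R A r ∘ₗ T.symm.toLinearMap, ?_⟩
  refine LinearMap.ext fun x => ?_
  simp only [LinearMap.comp_apply, LinearEquiv.coe_coe, LinearEquiv.symm_apply_apply]
  rw [← LinearMap.comp_apply (btmap S R A r), BT.btmap_comp_btmap_of_comp_eq_id hrs,
    LinearMap.id_apply, LinearEquiv.symm_apply_apply, LinearMap.id_apply]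

theorem AddClass_subset_retractClass_tensorClass :
    AddClass S (BT S R A C) ⊆ retractClass (tensorClass S R A (AddClass R C)) :=
  fun _ ⟨ι, s, r, hrs⟩ => ⟨_, finsupp_mem_tensorClass_AddClass ι, s, r, hrs⟩

end TensorClass

theorem separable_equivalence_Add_lemma_general (Λ Γ : Type) [Ring Λ] [Ring Γ]
    (N : Type) [AddCommGroup N] [Module Γ N] [Module Λᵐᵒᵖ N] [SMulCommClass Λᵐᵒᵖ Γ N]
    (C : Type) [AddCommGroup C] [Module Λ C]
    (L : Type) [AddCommGroup L] [Module Γ L] :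
    (ModuleCat.of Γ L ∈ leftPerp Γ (tensorClass Γ Λ N (AddClass Λ C)) →
      ModuleCat.of Γ L ∈ leftPerp Γ (AddClass Γ (BT Γ Λ N C))) ∧
    (SelfOrthClass Λ (AddClass Λ C) →
      MemCores Γ (tensorClass Γ Λ N (AddClass Λ C)) (ModuleCat.of Γ L) →
        MemCores Γ (AddClass Γ (BT Γ Λ N C)) (ModuleCat.of Γ L)) :=
  ⟨fun hL => leftPerp_subset_leftPerp_of_subset_retractClass
      AddClass_subset_retractClass_tensorClass hL,
    fun _ hL => hL.of_subset_retractClass tensorClass_AddClass_subset_AddClass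
      AddClass_subset_retractClass_tensorClass⟩

theorem separable_equivalence_Add_lemma (Λ Γ : Type) [Ring Λ] [Ring Γ]
    (M : Type) [AddCommGroup M] [Module Λ M] [Module Γᵐᵒᵖ M] [SMulCommClass Γᵐᵒᵖ Λ M]
    (N : Type) [AddCommGroup N] [Module Γ N] [Module Λᵐᵒᵖ N] [SMulCommClass Λᵐᵒᵖ Γ N]
    (X : Type) [AddCommGroup X] [Module Λ X] [Module Λᵐᵒᵖ X] [SMulCommClass Λᵐᵒᵖ Λ X]
    (Y : Type) [AddCommGroup Y] [Module Γ Y] [Module Γᵐᵒᵖ Y] [SMulCommClass Γᵐᵒᵖ Γ Y]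
    (sep : SepEq Λ Γ M N X Y)
    (C : Type) [AddCommGroup C] [Module Λ C]
    (L : Type) [AddCommGroup L] [Module Γ L] :
    (ModuleCat.of Γ L ∈ leftPerp Γ (tensorClass Γ Λ N (AddClass Λ C)) →
      ModuleCat.of Γ L ∈ leftPerp Γ (AddClass Γ (BT Γ Λ N C))) ∧
    (SelfOrthClass Λ (AddClass Λ C) →
      MemCores Γ (tensorClass Γ Λ N (AddClass Λ C)) (ModuleCat.of Γ L) →
        MemCores Γ (AddClass Γ (BT Γ Λ N C)) (ModuleCat.of Γ L)) :=
  separable_equivalence_Add_lemma_general Λ Γ N C L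
end
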